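/- Let k ≥ 1 and let m₁,…,m_{2k} be positive integers with m₁ = 2, m₂ ≡ 2 (mod 4), and m_l ≡ 0 (mod 4) for l = 3,…,2k. Let Ĝ = Γ(m₁−1, m₂, m₃, …, m_{2k}) (the graph obtained from Γ(m₁,…,m_{2k}) by deleting one vertex of the first block), and let Û_t = exp(−itL(Ĝ)). Then for all distinct vertices i, j of Ĝ and all t ∈ ℝ, |(Û_t)_{i,j}| ≤ 2/(m₂+1). -/

import Mathlib

open Finset Matrix

/-- `sig m l = m 1 + ⋯ + m l` (block sizes `m` are indexed starting from 1). -/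
def sig (m : ℕ → ℕ) (l : ℕ) : ℕ := ∑ i ∈ Finset.Icc 1 l, m i

/-- The (1-based) index of the block containing the (0-based) vertex `v`:
`blk r m v = b` iff `sig m (b-1) ≤ v < sig m b`. -/
def blk (r : ℕ) (m : ℕ → ℕ) (v : ℕ) : ℕ :=
  1 + ((Finset.Icc 1 r).filter (fun l => sig m l ≤ v)).card

/-- `Γ(m₁,…,m_r) = ((((O_{m₁} ∨ K_{m₂}) ∪ O_{m₃}) ∨ K_{m₄}) ⋯ )`:
the odd-indexed blocks are added as sets of isolated vertices (disjoint union with `O_{m_l}`)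
and the even-indexed blocks are cliques joined to everything already present.  Hence two
distinct vertices are adjacent iff the larger of their two block indices is even.  Vertices
are labelled `0,…,n-1` (`n = m₁+⋯+m_r`), block `B₁` first, then `B₂`, etc. -/
def GammaEven (r : ℕ) (m : ℕ → ℕ) : SimpleGraph (Fin (sig m r)) where
  Adj u v := u ≠ v ∧ (max (blk r m (u : ℕ)) (blk r m (v : ℕ))) % 2 = 0
  symm := by
    constructor
    intro u v h
    exact ⟨h.1.symm, by rw [max_comm]; exact h.2⟩
  loopless := by constructor; intro u h; exact h.1 rfl

instance (r : ℕ) (m : ℕ → ℕ) : DecidableRel (GammaEven r m).Adj := fun u v =>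
  decidable_of_iff (u ≠ v ∧ (max (blk r m (u : ℕ)) (blk r m (v : ℕ))) % 2 = 0) Iff.rfl

/-- `U_t = exp(−itL)`, where `L` is the Laplacian matrix of `G` (diagonal entries the
degrees, entry `−1` for each edge, `0` otherwise). -/
noncomputable def Ut {n : ℕ} (G : SimpleGraph (Fin n)) [DecidableRel G.Adj] (t : ℝ) :
    Matrix (Fin n) (Fin n) ℂ :=
  NormedSpace.exp ((-(Complex.I * (t : ℂ))) • G.lapMatrix ℂ)

/-- The transfer probability `p_G(i,j,t) = |(U_t)_{j,i}|²`. -/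
noncomputable def transferProb {n : ℕ} (G : SimpleGraph (Fin n)) [DecidableRel G.Adj]
    (i j : Fin n) (t : ℝ) : ℝ :=
  ‖Ut G t j i‖ ^ 2


/-!
Let `S_b` be the set of vertices in the first `b` blocks and `E_S = diag(1_S) - J_S / |S|` the
orthogonal projection onto the vectors supported on `S` with zero sum. Two distinct vertices are
adjacent iff the larger of their block indices is even, which gives
`L(Γ) = ∑_b (-1)^b |S_b| E_{S_b}`. The `E_{S_b}` form a chain (`E_S E_T = E_S` for `S ⊆ T`), so
their successive differences, completed by `1 - E_{S_r}`, are complete orthogonal idempotents `P_a`,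
and `exp(-itL) = ∑_a e^{-itλ_a} P_a` with real `λ_a`. For `i ≠ j` the entries `(P_a)_{ij}` sum to
`0` and all but one of them, `-1/|S_B|` with `B` the larger block index of `i` and `j`, are
nonnegative. Hence `|(U_t)_{ij}| ≤ ∑_a |(P_a)_{ij}| = 2/|S_B| ≤ 2/|S_2| = 2/(m₂+1)`, because the
first block of `Ĝ` is a single vertex and so `B ≥ 2`.
-/

theorem completeOrthogonalIdempotents_sub_of_mul_eq_min {R : Type*} [Ring R] {E : ℕ → R}
    (hE : ∀ a b, E a * E b = E (min a b)) {N : ℕ} (h0 : E 0 = 0) (hN : E N = 1) :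
    CompleteOrthogonalIdempotents (fun a : Fin N => E (a + 1) - E a) := by
  classical
  refine ⟨OrthogonalIdempotents.iff_mul_eq.2 fun a b => ?_, ?_⟩
  · simp only [sub_mul, mul_sub, hE]
    rcases lt_trichotomy (a : ℕ) b with h | h | h
    · rw [if_neg (Fin.ne_of_lt h), min_eq_left (by omega : (a : ℕ) + 1 ≤ b + 1),
        min_eq_left (by omega : (a : ℕ) + 1 ≤ b), min_eq_left (by omega : (a : ℕ) ≤ b + 1),
        min_eq_left h.le]
      abel
    · rw [if_pos (Fin.ext h), h]
      simp
    · rw [if_neg (Fin.ne_of_gt h), min_eq_right (by omega : (b : ℕ) + 1 ≤ a + 1),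
        min_eq_right (by omega : (b : ℕ) ≤ a + 1), min_eq_right (by omega : (b : ℕ) + 1 ≤ a),
        min_eq_right h.le]
      abel
  · rw [Fin.sum_univ_eq_sum_range (fun a => E (a + 1) - E a), sum_range_sub, hN, h0, sub_zero]

section MatrixExp

variable {n ι : Type*} [Fintype n] [DecidableEq n] [Fintype ι] {P : ι → Matrix n n ℂ}

theorem Matrix.exp_sum_smul_of_completeOrthogonalIdempotents
    (hP : CompleteOrthogonalIdempotents P) (x : ι → ℂ) :
    NormedSpace.exp (∑ a, x a • P a) = ∑ a, Complex.exp (x a) • P a := by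
  classical
  let _ : NormedRing (Matrix n n ℂ) := Matrix.linftyOpNormedRing
  let φ : (ι → ℂ) →+* Matrix n n ℂ :=
    { toFun := fun y => ∑ a, y a • P a
      map_one' := by simpa using hP.complete
      map_mul' := fun y z => by
        simp [Finset.sum_mul, Finset.mul_sum, hP.mul_eq, smul_smul, mul_comm]
      map_zero' := by simp
      map_add' := fun y z => by simp [add_smul, Finset.sum_add_distrib] }
  have hφ : Continuous φ :=
    continuous_finsetSum _ fun a _ => (continuous_apply a).smul continuous_const
  have h := NormedSpace.map_exp φ hφ x
  simp only [Pi.exp_def, ← Complex.exp_eq_exp_ℂ] at h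
  exact h.symm

theorem Matrix.norm_exp_sum_smul_apply_le (hP : CompleteOrthogonalIdempotents P) {x : ι → ℂ}
    (hx : ∀ a, (x a).re = 0) (i j : n) :
    ‖NormedSpace.exp (∑ a, x a • P a) i j‖ ≤ ∑ a, ‖P a i j‖ := by
  rw [exp_sum_smul_of_completeOrthogonalIdempotents hP, Matrix.sum_apply]
  refine (norm_sum_le _ _).trans (le_of_eq (sum_congr rfl fun a _ => ?_))
  rw [smul_apply, smul_eq_mul, norm_mul, Complex.norm_exp, hx a, Real.exp_zero, one_mul]

end MatrixExp

theorem Matrix.norm_exp_sum_smul_apply_le_of_mul_eq_min {n : Type*} [Fintype n] [DecidableEq n]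
    {E : ℕ → Matrix n n ℂ} (hE : ∀ a b, E a * E b = E (min a b)) (h0 : E 0 = 0) {N : ℕ}
    (hN : E N = 1) {s : Finset ℕ} (hs : ∀ b ∈ s, b ≤ N) {μ : ℕ → ℂ} (hμ : ∀ b, (μ b).re = 0)
    (i j : n) :
    ‖NormedSpace.exp (∑ b ∈ s, μ b • E b) i j‖ ≤ ∑ a ∈ range N, ‖(E (a + 1) - E a) i j‖ := by
  have hE_eq_sum : ∀ b ≤ N,
      E b = ∑ a : Fin N, (if (a : ℕ) < b then (1 : ℂ) else 0) • (E (a + 1) - E a) := by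
    intro b hb
    rw [Fin.sum_univ_eq_sum_range (fun a => (if a < b then (1 : ℂ) else 0) • (E (a + 1) - E a)),
      ← sum_range_add_sum_Ico _ hb,
      sum_congr rfl fun a ha => by rw [if_pos (mem_range.1 ha), one_smul], sum_range_sub,
      sum_eq_zero fun a ha => by rw [if_neg (by simp at ha; omega), zero_smul], h0, sub_zero,
      add_zero]
  have hexp : ∑ b ∈ s, μ b • E b =
      ∑ a : Fin N, (∑ b ∈ s, if (a : ℕ) < b then μ b else 0) • (E (a + 1) - E a) := by
    rw [sum_congr rfl fun b hb => by rw [hE_eq_sum b (hs b hb)]]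
    simp_rw [smul_sum, smul_smul, mul_ite, mul_one, mul_zero, sum_smul]
    exact sum_comm
  rw [hexp, ← Fin.sum_univ_eq_sum_range (fun a => ‖(E (a + 1) - E a) i j‖)]
  exact norm_exp_sum_smul_apply_le (completeOrthogonalIdempotents_sub_of_mul_eq_min hE h0 hN)
    (fun a => by simp [Complex.re_sum, apply_ite, hμ]) i j

theorem sum_abs_eq_neg_two_mul_of_sum_eq_zero {ι : Type*} [DecidableEq ι] {s : Finset ι}
    {x : ι → ℝ} {a₀ : ι} (ha₀ : a₀ ∈ s) (hsum : ∑ a ∈ s, x a = 0)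
    (hx : ∀ a ∈ s, a ≠ a₀ → 0 ≤ x a) :
    ∑ a ∈ s, |x a| = -2 * x a₀ := by
  rw [← add_sum_erase s _ ha₀] at hsum ⊢
  have hrest : ∑ a ∈ s.erase a₀, |x a| = ∑ a ∈ s.erase a₀, x a :=
    sum_congr rfl fun a ha => abs_of_nonneg (hx a (mem_of_mem_erase ha) (ne_of_mem_erase ha))
  have hnonneg : 0 ≤ ∑ a ∈ s.erase a₀, x a :=
    sum_nonneg fun a ha => hx a (mem_of_mem_erase ha) (ne_of_mem_erase ha)
  rw [hrest, abs_of_nonpos (by linarith)]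
  linarith

theorem sum_range_abs_sub_succ_eq {h : ℕ → ℝ} {B N : ℕ} (hB : 1 ≤ B) (hBN : B ≤ N)
    (hlt : ∀ b < B, h b = 0) (hanti : ∀ b, B ≤ b → h (b + 1) ≤ h b) (hN : h (N + 1) = 0) :
    ∑ a ∈ range (N + 1), |h a - h (a + 1)| = 2 * h B := by
  have hstep : ∀ a ∈ range (N + 1), a ≠ B - 1 → 0 ≤ h a - h (a + 1) := fun a _ ha => by
    rcases lt_or_ge a B with haB | haB
    · rw [hlt a haB, hlt (a + 1) (by omega), sub_zero]
    · exact sub_nonneg.2 (hanti a haB)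
  rw [sum_abs_eq_neg_two_mul_of_sum_eq_zero (mem_range.2 (by omega))
      (by rw [sum_range_sub', hlt 0 hB, hN, sub_zero]) hstep,
    hlt (B - 1) (by omega), Nat.sub_add_cancel hB]
  ring

section Centering

variable {V 𝕜 : Type*} [DecidableEq V] [Field 𝕜]

def centeringOn (S : Finset V) : Matrix V V 𝕜 :=
  of fun u v => (if u = v ∧ u ∈ S then 1 else 0) - if u ∈ S ∧ v ∈ S then (#S : 𝕜)⁻¹ else 0

theorem centeringOn_empty : (centeringOn ∅ : Matrix V V 𝕜) = 0 := by
  ext u v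
  simp [centeringOn]

theorem transpose_centeringOn (S : Finset V) :
    (centeringOn S : Matrix V V 𝕜)ᵀ = centeringOn S := by
  ext u v
  simp only [transpose_apply, centeringOn, of_apply, eq_comm (a := v), and_comm (a := v ∈ S)]
  by_cases huv : u = v <;> simp [huv]

theorem centeringOn_apply_of_ne (S : Finset V) {u v : V} (huv : u ≠ v) :
    (centeringOn S : Matrix V V 𝕜) u v = -if u ∈ S ∧ v ∈ S then (#S : 𝕜)⁻¹ else 0 := by
  simp [centeringOn, huv]

variable [CharZero 𝕜]

theorem natCast_card_mul_centeringOn_apply (S : Finset V) (u v : V) :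
    (#S : 𝕜) * centeringOn S u v =
      (if u = v ∧ u ∈ S then (#S : 𝕜) - 1 else 0) - if u ≠ v ∧ u ∈ S ∧ v ∈ S then 1 else 0 := by
  by_cases hu : u ∈ S
  · have hS : (#S : 𝕜) ≠ 0 := Nat.cast_ne_zero.2 (card_ne_zero_of_mem hu)
    by_cases huv : u = v
    · subst huv
      simp [centeringOn, hu, hS, mul_sub]
    · by_cases hv : v ∈ S <;> simp [centeringOn, huv, hu, hv, hS]
  · simp [centeringOn, hu]

variable [Fintype V]

theorem centeringOn_mul_of_subset {S T : Finset V} (h : S ⊆ T) :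
    (centeringOn S : Matrix V V 𝕜) * centeringOn T = centeringOn S := by
  ext u w
  simp only [centeringOn, ite_and, mul_apply, of_apply, mul_sub, mul_ite, mul_one, mul_zero,
    sub_mul, ite_mul, one_mul, zero_mul, sum_sub_distrib, sum_ite_eq', mem_univ, ↓reduceIte,
    sum_ite_mem, univ_inter, sum_ite_irrel, sum_ite_eq, inter_eq_right.2 h, sum_const, nsmul_eq_mul]
  by_cases hu : u ∈ S
  · have hS : (#S : 𝕜) ≠ 0 := Nat.cast_ne_zero.2 (card_ne_zero_of_mem hu)
    by_cases hw : w ∈ S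
    · simp [hu, hw, h hu, h hw, hS]
    · by_cases hwT : w ∈ T <;> by_cases huw : u = w <;> simp_all [h hu]
  · simp [hu]

theorem centeringOn_mul_of_superset {S T : Finset V} (h : T ⊆ S) :
    (centeringOn S : Matrix V V 𝕜) * centeringOn T = centeringOn T := by
  rw [← transpose_centeringOn S, ← transpose_centeringOn T, ← transpose_mul,
    centeringOn_mul_of_subset h]

end Centering

theorem indicator_Icc_inv_card_succ_le {V : Type*} {S : ℕ → Finset V} (hS : Monotone S)
    {B N b : ℕ} (hSB : (S B).Nonempty) (hb : B ≤ b) :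
    (Set.Icc B N).indicator (fun b => (#(S b) : ℝ)⁻¹) (b + 1) ≤
      (Set.Icc B N).indicator (fun b => (#(S b) : ℝ)⁻¹) b := by
  by_cases hb1 : b + 1 ≤ N
  · rw [Set.indicator_of_mem (Set.mem_Icc.2 ⟨by omega, hb1⟩),
      Set.indicator_of_mem (Set.mem_Icc.2 ⟨hb, by omega⟩)]
    exact inv_anti₀ (Nat.cast_pos.2 (hSB.mono (hS hb)).card_pos)
      (Nat.cast_le.2 (card_le_card (hS b.le_succ)))
  · rw [Set.indicator_of_notMem fun h => hb1 h.2]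
    exact Set.indicator_nonneg (fun _ _ => by positivity) _

theorem norm_exp_sum_smul_centeringOn_apply_le {V : Type*} [Fintype V] [DecidableEq V]
    {S : ℕ → Finset V} (hS : Monotone S) (hS0 : S 0 = ∅) {N : ℕ} {s : Finset ℕ}
    (hs : ∀ b ∈ s, b ≤ N) {μ : ℕ → ℂ} (hμ : ∀ b, (μ b).re = 0) {i j : V} (hij : i ≠ j)
    {B : ℕ} (hBN : B ≤ N) (hB : ∀ b, i ∈ S b ∧ j ∈ S b ↔ B ≤ b) :
    ‖NormedSpace.exp (∑ b ∈ s, μ b • (centeringOn (S b) : Matrix V V ℂ)) i j‖ ≤ 2 / #(S B) := by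
  -- Extended by `1`, the chain's last difference `1 - E N` completes the family.
  set E : ℕ → Matrix V V ℂ := fun b => if b ≤ N then centeringOn (S b) else 1
  have hE : ∀ a b, E a * E b = E (min a b) := by
    intro a b
    rcases le_total a b with hab | hab
    · by_cases hb : b ≤ N
      · simp [E, hb, hab.trans hb, min_eq_left hab, centeringOn_mul_of_subset (hS hab)]
      · simp [E, hb, min_eq_left hab]
    · by_cases ha : a ≤ N
      · simp [E, ha, hab.trans ha, min_eq_right hab, centeringOn_mul_of_superset (hS hab)]
      · simp [E, ha, min_eq_right hab]
  have hsum : ∑ b ∈ s, μ b • centeringOn (S b) = ∑ b ∈ s, μ b • E b :=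
    sum_congr rfl fun b hb => by simp [E, hs b hb]
  set h := (Set.Icc B N).indicator fun b => (#(S b) : ℝ)⁻¹
  have hEij : ∀ b, E b i j = -(h b : ℂ) := by
    intro b
    by_cases hb : b ≤ N
    · rw [show E b = centeringOn (S b) from if_pos hb, centeringOn_apply_of_ne _ hij]
      by_cases hBb : B ≤ b
      · simp [h, hb, hBb, (hB b).2 hBb]
      · simp [h, hBb, mt (hB b).1 hBb]
    · simp [E, h, hb, hij]
  have hB1 : 1 ≤ B := Nat.one_le_iff_ne_zero.2 fun h0 => by simpa [hS0] using (hB 0).2 h0.le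
  calc ‖NormedSpace.exp (∑ b ∈ s, μ b • centeringOn (S b)) i j‖
      ≤ ∑ a ∈ range (N + 1), ‖(E (a + 1) - E a) i j‖ := by
        rw [hsum]
        exact Matrix.norm_exp_sum_smul_apply_le_of_mul_eq_min hE
          (by simp [E, hS0, centeringOn_empty]) (by simp [E])
          (fun b hb => Nat.le_succ_of_le (hs b hb)) hμ i j
    _ = ∑ a ∈ range (N + 1), |h a - h (a + 1)| := by
        refine sum_congr rfl fun a _ => ?_
        rw [Matrix.sub_apply, hEij, hEij, ← Real.norm_eq_abs, ← Complex.norm_real]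
        push_cast
        ring_nf
    _ = 2 / #(S B) := by
        rw [sum_range_abs_sub_succ_eq hB1 hBN
          (fun b hb => Set.indicator_of_notMem (fun hb' => (not_le.2 hb) hb'.1) _)
          (fun b => indicator_Icc_inv_card_succ_le hS ⟨i, ((hB B).2 le_rfl).1⟩)
          (Set.indicator_of_notMem (fun hb' => by simpa using hb'.2) _),
          Set.indicator_of_mem (Set.mem_Icc.2 ⟨le_rfl, hBN⟩), div_eq_mul_inv]

theorem sum_Ico_neg_one_pow_of_even {R : Type*} [Ring R] {r B : ℕ} (hr : Even r)
    (hB : B ≤ r + 1) : ∑ b ∈ Ico B (r + 1), (-1 : R) ^ b = if Even B then 1 else 0 := by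
  rw [sum_Ico_eq_sub _ hB, ← Fin.sum_univ_eq_sum_range, ← Fin.sum_univ_eq_sum_range,
    Fin.sum_neg_one_pow, Fin.sum_neg_one_pow]
  by_cases hB' : Even B <;> simp [Nat.even_add_one, hr, hB']

section Gamma

variable {r : ℕ} {m : ℕ → ℕ}

theorem sig_zero (m : ℕ → ℕ) : sig m 0 = 0 := by
  simp [sig]

theorem sig_succ (m : ℕ → ℕ) (b : ℕ) : sig m (b + 1) = sig m b + m (b + 1) := by
  rw [sig, sum_Icc_succ_top (Nat.le_add_left 1 b)]
  rfl

theorem sig_mono (m : ℕ → ℕ) : Monotone (sig m) := fun _ _ h =>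
  sum_le_sum_of_subset (Icc_subset_Icc_right h)

def firstBlocks (r : ℕ) (m : ℕ → ℕ) (b : ℕ) : Finset (Fin (sig m r)) :=
  {u | (u : ℕ) < sig m b}

@[simp]
theorem mem_firstBlocks {b : ℕ} {u : Fin (sig m r)} :
    u ∈ firstBlocks r m b ↔ (u : ℕ) < sig m b := by
  simp [firstBlocks]

theorem firstBlocks_mono : Monotone (firstBlocks r m) := fun _ _ h u hu => by
  simp only [mem_firstBlocks] at hu ⊢
  exact hu.trans_le (sig_mono m h)

theorem firstBlocks_zero : firstBlocks r m 0 = ∅ := by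
  ext u
  simp [sig_zero]

theorem card_firstBlocks {b : ℕ} (hb : b ≤ r) : #(firstBlocks r m b) = sig m b := by
  rw [firstBlocks, Fin.card_filter_val_lt, min_eq_right (sig_mono m hb)]

theorem blk_le_iff_mem_firstBlocks {u : Fin (sig m r)} {b : ℕ} :
    blk r m u ≤ b ↔ u ∈ firstBlocks r m b := by
  rw [mem_firstBlocks, blk]
  constructor
  · intro h
    by_contra! hb
    have hbr : b ≤ r := by
      by_contra! hrb
      exact absurd (u.isLt.trans_le (sig_mono m hrb.le)) (not_lt.2 hb)
    have hsub : Icc 1 b ⊆ (Icc 1 r).filter (fun l => sig m l ≤ u) := fun l hl => by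
      simp only [mem_Icc, mem_filter] at hl ⊢
      exact ⟨⟨hl.1, hl.2.trans hbr⟩, (sig_mono m hl.2).trans hb⟩
    have := card_le_card hsub
    simp only [Nat.card_Icc] at this
    omega
  · intro h
    have hb : 1 ≤ b := Nat.one_le_iff_ne_zero.2 fun hb => by simp [hb, sig_zero] at h
    have hsub : (Icc 1 r).filter (fun l => sig m l ≤ u) ⊆ Icc 1 (b - 1) := fun l hl => by
      simp only [mem_Icc, mem_filter] at hl ⊢
      refine ⟨hl.1.1, ?_⟩
      by_contra! hlb
      exact absurd (h.trans_le (sig_mono m (by omega : b ≤ l))) (not_lt.2 hl.2)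
    have := card_le_card hsub
    simp only [Nat.card_Icc] at this
    omega

theorem one_le_blk (u : ℕ) : 1 ≤ blk r m u := Nat.le_add_right 1 _

theorem blk_le (u : Fin (sig m r)) : blk r m u ≤ r :=
  blk_le_iff_mem_firstBlocks.2 (mem_firstBlocks.2 u.isLt)

theorem ite_gammaEven_adj {R : Type*} [Ring R] (hr : Even r) (u v : Fin (sig m r)) :
    (if (GammaEven r m).Adj u v then (1 : R) else 0) =
      ∑ b ∈ Icc 1 r,
        (-1) ^ b * if u ≠ v ∧ u ∈ firstBlocks r m b ∧ v ∈ firstBlocks r m b then 1 else 0 := by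
  by_cases huv : u = v
  · simp [huv]
  set B := max (blk r m u) (blk r m v)
  have hB : ∀ b, u ∈ firstBlocks r m b ∧ v ∈ firstBlocks r m b ↔ B ≤ b := fun b => by
    rw [max_le_iff, blk_le_iff_mem_firstBlocks, blk_le_iff_mem_firstBlocks]
  have hB1 : 1 ≤ B := (one_le_blk _).trans (le_max_left _ _)
  have hBr : B ≤ r := max_le (blk_le u) (blk_le v)
  simp only [huv, ne_eq, not_false_eq_true, true_and, hB, mul_ite, mul_one, mul_zero]
  rw [← sum_filter, show (Icc 1 r).filter (B ≤ ·) = Ico B (r + 1) by ext b; simp; omega,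
    sum_Ico_neg_one_pow_of_even hr (by omega)]
  simp [GammaEven, huv, Nat.even_iff, B]

theorem lapMatrix_gammaEven {𝕜 : Type*} [Field 𝕜] [CharZero 𝕜] (hr : Even r) :
    (GammaEven r m).lapMatrix 𝕜 = ∑ b ∈ Icc 1 r,
      ((-1) ^ b * #(firstBlocks r m b) : 𝕜) • centeringOn (firstBlocks r m b) := by
  have hdeg : ∀ u, ((GammaEven r m).degree u : 𝕜) = ∑ b ∈ Icc 1 r,
      (-1) ^ b * if u ∈ firstBlocks r m b then (#(firstBlocks r m b) : 𝕜) - 1 else 0 := by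
    intro u
    rw [SimpleGraph.degree_eq_sum_if_adj]
    simp_rw [ite_gammaEven_adj hr u]
    rw [sum_comm]
    simp_rw [← mul_sum]
    refine sum_congr rfl fun b _ => congrArg _ ?_
    by_cases hu : u ∈ firstBlocks r m b
    · have hrow : ({w | u ≠ w ∧ u ∈ firstBlocks r m b ∧ w ∈ firstBlocks r m b} : Finset _) =
          (firstBlocks r m b).erase u := by
        ext w
        simp only [mem_filter, mem_univ, true_and, mem_erase, hu]
        tauto
      rw [if_pos hu, sum_boole, hrow, card_erase_of_mem hu,
        Nat.cast_sub (card_pos.2 ⟨u, hu⟩), Nat.cast_one]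
    · simp [hu]
  ext u v
  simp only [SimpleGraph.lapMatrix, SimpleGraph.degMatrix, Matrix.sub_apply, diagonal_apply,
    SimpleGraph.adjMatrix_apply, ite_gammaEven_adj hr, Matrix.sum_apply, Matrix.smul_apply,
    smul_eq_mul, mul_assoc, natCast_card_mul_centeringOn_apply, mul_sub, sum_sub_distrib]
  by_cases huv : u = v
  · subst huv
    simp [hdeg]
  · simp [huv]

end Gamma

theorem ut_offdiag_bound_delete_first_block_general (k : ℕ) (m : ℕ → ℕ)
    (hm1 : m 1 = 2)
    (mh : ℕ → ℕ) (hmh : ∀ p, mh p = if p = 1 then m 1 - 1 else m p)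
    (i j : Fin (sig mh (2 * k))) (hij : i ≠ j) (t : ℝ) :
    ‖Ut (GammaEven (2 * k) mh) t i j‖ ≤ 2 / ((m 2 : ℝ) + 1) := by
  have hsig1 : sig mh 1 = 1 := by simp [sig, hmh, hm1]
  have hsig2 : sig mh 2 = m 2 + 1 := by
    rw [sig_succ, hsig1, hmh]
    simp [add_comm]
  set B := max (blk (2 * k) mh i) (blk (2 * k) mh j)
  have hB : ∀ b, i ∈ firstBlocks _ mh b ∧ j ∈ firstBlocks _ mh b ↔ B ≤ b := fun b => by
    rw [max_le_iff, blk_le_iff_mem_firstBlocks, blk_le_iff_mem_firstBlocks]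
  have hBr : B ≤ 2 * k := max_le (blk_le i) (blk_le j)
  have hB2 : 2 ≤ B := by
    by_contra! h
    obtain ⟨hi, hj⟩ := (hB 1).2 (by omega)
    simp only [mem_firstBlocks, hsig1] at hi hj
    exact hij (Fin.ext (by omega))
  rw [Ut, lapMatrix_gammaEven (even_two_mul k), smul_sum]
  simp_rw [smul_smul]
  refine (norm_exp_sum_smul_centeringOn_apply_le firstBlocks_mono firstBlocks_zero
    (fun b hb => (mem_Icc.1 hb).2)
    (fun b => by simp [← Complex.ofReal_one, ← Complex.ofReal_neg, ← Complex.ofReal_pow]) hij hBr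
    hB).trans ?_
  rw [card_firstBlocks hBr]
  have hle : (m 2 : ℝ) + 1 ≤ sig mh B := by exact_mod_cast hsig2 ▸ sig_mono mh hB2
  gcongr

/-- Let `m₁ = 2`, `m₂ ≡ 2 (mod 4)`, `m_l ≡ 0 (mod 4)` for
`l = 3,…,2k`, and let `Ĝ = Γ(m₁−1, m₂, …, m_{2k})` (one vertex of the first block
removed).  Then every offdiagonal entry of `Û_t = exp(−itL(Ĝ))` has modulus at most
`2/(m₂+1)`. -/
theorem ut_offdiag_bound_delete_first_block (k : ℕ) (hk : 1 ≤ k) (m : ℕ → ℕ)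
    (hm : ∀ i, 1 ≤ i → i ≤ 2 * k → 1 ≤ m i) (hm1 : m 1 = 2)
    (hm2 : m 2 % 4 = 2) (hml : ∀ l, 3 ≤ l → l ≤ 2 * k → m l % 4 = 0)
    (mh : ℕ → ℕ) (hmh : ∀ p, mh p = if p = 1 then m 1 - 1 else m p)
    (i j : Fin (sig mh (2 * k))) (hij : i ≠ j) (t : ℝ) :
    ‖Ut (GammaEven (2 * k) mh) t i j‖ ≤ 2 / ((m 2 : ℝ) + 1) :=
  ut_offdiag_bound_delete_first_block_general k m hm1 mh hmh i j hij t
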